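/- Suppose F : [2x₀, ∞) → C is a continuous function satisfying the homogeneous Volterra equation F(2x) + ∫_{2x}^{∞} K(x, y−x) F(y) dy = 0 for all x ≥ x₀, where K is continuous and rapidly decreasing in its second argument, uniformly for x in compacts, and F is bounded. Then F ≡ 0 on [2x₀, ∞). -/

import Mathlib

open MeasureTheory Set Filter Topology

/-- Uniqueness for the homogeneous Volterra-type equation on a half-line: a bounded
continuous `F` with `F(2x) + ∫_{2x}^∞ K(x, y−x) F(y) dy = 0` for all `x ≥ x₀`,
where `K` is continuous, rapidly decreasing in its second argument uniformly for
`x` in compacts, and the tail operator norms tend to `0`, must vanish identically. -/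
theorem stmt16_volterra_uniqueness
    (x₀ : ℝ) (K : ℝ → ℝ → ℂ) (F : ℝ → ℂ)
    (hKcont : Continuous fun p : ℝ × ℝ => K p.1 p.2)
    (hKdecay : ∀ a b : ℝ, ∀ n : ℕ, ∃ C : ℝ, ∀ x ∈ Icc a b, ∀ y : ℝ,
      ‖K x y‖ ≤ C / (1 + |y|) ^ n)
    (hKint : ∀ x : ℝ, x₀ ≤ x → IntegrableOn (fun y => K x (y - x)) (Ioi (2 * x)))
    (htail : Tendsto (fun x : ℝ => ∫ y in Ioi (2 * x), ‖K x (y - x)‖) atTop (𝓝 0))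
    (hFcont : ContinuousOn F (Ici (2 * x₀)))
    (hFbdd : ∃ M : ℝ, ∀ s, 2 * x₀ ≤ s → ‖F s‖ ≤ M)
    (heq : ∀ x, x₀ ≤ x → F (2 * x) + ∫ y in Ioi (2 * x), K x (y - x) * F y = 0) :
    ∀ s, 2 * x₀ ≤ s → F s = 0 := by
  obtain ⟨M₀, hM₀⟩ := hFbdd
  set M := max M₀ 0 with hMdef
  have hM : ∀ s, 2 * x₀ ≤ s → ‖F s‖ ≤ M := fun s hs => (hM₀ s hs).trans (le_max_left _ _)
  have hMnn : 0 ≤ M := le_max_right _ _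
  -- Representation: F s = -∫ ...
  have hrep : ∀ s, 2 * x₀ ≤ s →
      F s = -∫ y in Ioi s, K (s / 2) (y - s / 2) * F y := by
    intro s hs
    have hx : x₀ ≤ s / 2 := by linarith
    have h2 : 2 * (s / 2) = s := by ring
    have h := heq (s / 2) hx
    rw [h2] at h
    exact eq_neg_of_add_eq_zero_left h
  -- geometric decay of M / 2^n
  have hMto : Tendsto (fun n : ℕ => M / 2 ^ n) atTop (𝓝 0) := by
    have h := tendsto_pow_atTop_nhds_zero_of_lt_one
      (by norm_num : (0:ℝ) ≤ 1/2) (by norm_num : (1/2:ℝ) < 1)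
    have := (tendsto_const_nhds (x := M)).mul h
    simpa [div_pow, div_eq_mul_inv, mul_comm] using this
  -- choose X₁ where the tail norm is ≤ 1/2
  obtain ⟨X₁, hX₁⟩ := eventually_atTop.1
    (htail.eventually_lt_const (by norm_num : (0:ℝ) < 1/2))
  set X := max X₁ x₀ with hXdef
  have hXx₀ : x₀ ≤ X := le_max_right _ _
  have hXX₁ : X₁ ≤ X := le_max_left _ _
  -- Step 1: F vanishes on [2X, ∞)
  have claim1 : ∀ n : ℕ, ∀ s, 2 * X ≤ s → ‖F s‖ ≤ M / 2 ^ n := by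
    intro n
    induction n with
    | zero =>
      intro s hs
      simpa using hM s (by linarith)
    | succ n ih =>
      intro s hs
      have hs0 : 2 * x₀ ≤ s := by linarith
      rw [hrep s hs0, norm_neg]
      set x := s / 2 with hxdef
      have hx2 : 2 * x = s := by rw [hxdef]; ring
      have hxx₀ : x₀ ≤ x := by rw [hxdef]; linarith
      have hKi : IntegrableOn (fun y => ‖K x (y - x)‖) (Ioi s) := by
        have := (hKint x hxx₀).norm
        rwa [hx2] at this
      have hint : Integrable (fun y => ‖K x (y - x)‖ * (M / 2 ^ n))
          (volume.restrict (Ioi s)) := hKi.mul_const _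
      refine (norm_integral_le_of_norm_le hint ?_).trans ?_
      · rw [ae_restrict_iff' measurableSet_Ioi]
        filter_upwards with y hy
        rw [norm_mul]
        exact mul_le_mul_of_nonneg_left (ih y (le_trans hs hy.le)) (norm_nonneg _)
      · rw [integral_mul_const]
        have htb : (∫ y in Ioi s, ‖K x (y - x)‖) ≤ 1 / 2 := by
          have hxX₁ : X₁ ≤ x := by rw [hxdef]; linarith
          have := (hX₁ x hxX₁).le
          rwa [hx2] at this
        calc (∫ y in Ioi s, ‖K x (y - x)‖) * (M / 2 ^ n)
            ≤ (1 / 2) * (M / 2 ^ n) :=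
              mul_le_mul_of_nonneg_right htb (div_nonneg hMnn (by positivity))
          _ = M / 2 ^ (n + 1) := by rw [pow_succ]; ring
  have hzero_tail : ∀ s, 2 * X ≤ s → F s = 0 := by
    intro s hs
    have h1 : ‖F s‖ ≤ 0 := ge_of_tendsto hMto (Eventually.of_forall fun n => claim1 n s hs)
    simpa using le_antisymm h1 (norm_nonneg _)
  -- kernel bound on the compact strip
  obtain ⟨C₀, hC₀⟩ := hKdecay x₀ X 0
  set C := max C₀ 1 with hCdef
  have hC1 : (1:ℝ) ≤ C := le_max_right _ _
  have hCnn : (0:ℝ) ≤ C := by linarith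
  have hC : ∀ x ∈ Icc x₀ X, ∀ y : ℝ, ‖K x y‖ ≤ C := by
    intro x hx y
    have := hC₀ x hx y
    simp only [pow_zero, div_one] at this
    exact this.trans (le_max_left _ _)
  set δ := 1 / (2 * C) with hδdef
  have hδpos : 0 < δ := by rw [hδdef]; positivity
  have hCδ : C * δ = 1 / 2 := by
    rw [hδdef]; field_simp
  -- Step 2: backwards propagation
  have main : ∀ k : ℕ, ∀ s, 2 * x₀ ≤ s → 2 * X - k * δ ≤ s → F s = 0 := by
    intro k
    induction k with
    | zero =>
      intro s hs0 hs1
      exact hzero_tail s (by simpa using hs1)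
    | succ k ih =>
      intro s hs0 hs1
      by_cases hcase : 2 * X - k * δ ≤ s
      · exact ih s hs0 hcase
      push_neg at hcase
      set t := 2 * X - k * δ with htdef
      have hst : s < t := hcase
      have hsδ : t - δ ≤ s := by
        have : ((k:ℝ) + 1) * δ = k * δ + δ := by ring
        rw [htdef]
        push_cast at hs1
        linarith [hs1]
      have htzero : ∀ y, t ≤ y → F y = 0 := fun y hy => ih y (by linarith) hy
      have ht2X : t ≤ 2 * X := by
        rw [htdef]
        have : (0:ℝ) ≤ k * δ := by positivity
        linarith
      have inner : ∀ n : ℕ, ∀ u, 2 * x₀ ≤ u → t - δ ≤ u → u ≤ t → ‖F u‖ ≤ M / 2 ^ n := by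
        intro n
        induction n with
        | zero => intro u hu0 _ _; simpa using hM u hu0
        | succ n ih2 =>
          intro u hu0 hu1 hu2
          rw [hrep u hu0, norm_neg]
          set x := u / 2 with hxdef
          have hx2 : 2 * x = u := by rw [hxdef]; ring
          have hxI : x ∈ Icc x₀ X := by
            constructor
            · rw [hxdef]; linarith
            · rw [hxdef]; linarith
          set c := C * (M / 2 ^ n) with hcdef
          have hcnn : 0 ≤ c := by
            rw [hcdef]; positivity
          have hgint : Integrable ((Ioc u t).indicator (fun _ => c))
              (volume.restrict (Ioi u)) := by
            refine IntegrableOn.integrable_indicator ?_ measurableSet_Ioc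
            refine (integrableOn_const_iff (C := c)).2 (Or.inr ?_)
            calc (volume.restrict (Ioi u)) (Ioc u t) ≤ volume (Ioc u t) :=
                  Measure.restrict_apply_le _ _
              _ < ⊤ := measure_Ioc_lt_top
          have hbound : ∀ᵐ y ∂(volume.restrict (Ioi u)),
              ‖K x (y - x) * F y‖ ≤ (Ioc u t).indicator (fun _ => c) y := by
            rw [ae_restrict_iff' measurableSet_Ioi]
            filter_upwards with y hy
            by_cases hyt : y ≤ t
            · rw [indicator_of_mem (show y ∈ Ioc u t from ⟨hy, hyt⟩), norm_mul, hcdef]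
              have h1 := hC x hxI (y - x)
              have h2 := ih2 y (by linarith [mem_Ioi.1 hy]) (by linarith [mem_Ioi.1 hy]) hyt
              exact mul_le_mul h1 h2 (norm_nonneg _) hCnn
            · push_neg at hyt
              rw [indicator_of_notMem (fun h => absurd h.2 hyt.not_ge)]
              rw [htzero y hyt.le, mul_zero, norm_zero]
          refine (norm_integral_le_of_norm_le hgint hbound).trans ?_
          rw [integral_indicator measurableSet_Ioc, setIntegral_const, measureReal_def,
            Measure.restrict_apply measurableSet_Ioc]
          have hie : Ioc u t ∩ Ioi u = Ioc u t := inter_eq_left.2 fun y hy => hy.1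
          rw [hie, Real.volume_Ioc, ENNReal.toReal_ofReal (by linarith), smul_eq_mul]
          calc (t - u) * c ≤ δ * c := by
                apply mul_le_mul_of_nonneg_right _ hcnn
                linarith
            _ = (C * δ) * (M / 2 ^ n) := by rw [hcdef]; ring
            _ = (1 / 2) * (M / 2 ^ n) := by rw [hCδ]
            _ = M / 2 ^ (n + 1) := by rw [pow_succ]; ring
      have h1 : ‖F s‖ ≤ 0 := ge_of_tendsto hMto
        (Eventually.of_forall fun n => inner n s hs0 hsδ hst.le)
      simpa using le_antisymm h1 (norm_nonneg _)
  -- conclude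
  intro s hs
  obtain ⟨N, hN⟩ := exists_nat_ge ((2 * X - 2 * x₀) / δ)
  refine main N s hs ?_
  have : 2 * X - 2 * x₀ ≤ N * δ := by
    rw [div_le_iff₀ hδpos] at hN
    linarith
  linarith
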